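/- arXiv:1804.01860 — 4 statements merged into one kernel-verified Lean document; each statement's English description precedes it below -/
import Mathlib

section
/- Let n ≥ 2 and let P_n be the path graph on n vertices. Then the chromatic curling number of P_n equals n/2 if n is even and (n+1)/2 if n is odd. -/
open SimpleGraph Finset

/-- A proper vertex colouring of `G` with colour set `Fin k`. -/
def IsProperColoring {V : Type*} (G : SimpleGraph V) {k : ℕ} (C : V → Fin k) : Prop :=
  ∀ ⦃v w⦄, G.Adj v w → C v ≠ C w

/-- The chromatic number of `G`, as a natural number. -/
noncomputable def chi {V : Type*} (G : SimpleGraph V) : ℕ :=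
  G.chromaticNumber.toNat

/-- θ(cᵢ): the number of vertices receiving colour `i` under the colouring `C`. -/
def theta {V : Type*} [Fintype V] {k : ℕ} (C : V → Fin k) (i : Fin k) : ℕ :=
  (Finset.univ.filter fun v => C v = i).card

/-- The list of colour class sizes of `C`, sorted in descending order. -/
def classSizesDesc {V : Type*} [Fintype V] {k : ℕ} (C : V → Fin k) : List ℕ :=
  (List.insertionSort (· ≤ ·) (List.ofFn fun i => theta C i)).reverse

/-- A χ⁻-colouring of `G`: a proper colouring with exactly χ(G) colours such that,
greedily, the colour class of `c₁` is as large as possible, then the colour class of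
`c₂` is as large as possible among the remaining vertices, and so on; equivalently,
the descending sequence of colour class sizes is lexicographically maximal among
all proper colourings with χ(G) colours. -/
def IsChiMinusColoring {V : Type*} [Fintype V] (G : SimpleGraph V)
    (C : V → Fin (chi G)) : Prop :=
  IsProperColoring G C ∧
    ∀ C' : V → Fin (chi G), IsProperColoring G C' →
      ¬ List.Lex (· < ·) (classSizesDesc C) (classSizesDesc C')

lemma count_even_aux (n : ℕ) :
    ((Finset.range n).filter (fun m => Even m)).card = (n + 1) / 2 := by
  induction n with
  | zero => simp
  | succ n ih =>
    rw [Finset.range_add_one, Finset.filter_insert]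
    by_cases h : Even n
    · rw [if_pos h, Finset.card_insert_of_notMem (by simp), ih]
      obtain ⟨m, rfl⟩ := h
      omega
    · rw [if_neg h, ih]
      rw [Nat.not_even_iff] at h
      omega

lemma fin_count_even (n : ℕ) :
    ((Finset.univ : Finset (Fin n)).filter (fun v => Even v.val)).card = (n + 1) / 2 := by
  rw [← count_even_aux n]
  apply Finset.card_bij (fun v _ => v.val)
  · intro a ha
    simp only [Finset.mem_filter, Finset.mem_range] at ha ⊢
    exact ⟨a.isLt, ha.2⟩
  · intro a _ b _ h
    exact Fin.ext h
  · intro b hb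
    simp only [Finset.mem_filter, Finset.mem_range] at hb
    exact ⟨⟨b, hb.1⟩, by simp [hb.2], rfl⟩

lemma fin_count_odd (n : ℕ) :
    ((Finset.univ : Finset (Fin n)).filter (fun v => ¬ Even v.val)).card = n / 2 := by
  have h := Finset.card_filter_add_card_filter_not
      (s := (Finset.univ : Finset (Fin n))) (p := fun v => Even v.val)
  rw [fin_count_even] at h
  simp only [Finset.card_univ, Fintype.card_fin] at h
  omega

lemma path_aux (n k : ℕ) (hn : 2 ≤ n) (hk : k = 2) (C : Fin n → Fin k)
    (h : IsProperColoring (pathGraph n) C) :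
    Finset.univ.sup (theta C) = (n + 1) / 2 := by
  subst hk
  have h0 : 0 < n := by omega
  set a : Fin 2 := C ⟨0, h0⟩ with ha
  -- the coloring alternates
  have key : ∀ m : ℕ, ∀ hm : m < n, C ⟨m, hm⟩ = if Even m then a else a + 1 := by
    intro m
    induction m with
    | zero => intro hm; simp [ha]
    | succ m ih =>
      intro hm
      have hm' : m < n := by omega
      have hadj : (pathGraph n).Adj ⟨m, hm'⟩ ⟨m + 1, hm⟩ := by
        rw [pathGraph_adj]; left; rfl
      have hne := h hadj
      have him := ih hm'
      have hfin : ∀ x y : Fin 2, x ≠ y → y = x + 1 := by decide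
      have := hfin _ _ hne
      rw [him] at this
      by_cases hev : Even m
      · have : ¬ Even (m + 1) := by simp [Nat.even_add_one, hev]
        simp only [this, if_false, hev, if_true] at *
        omega
      · have hev1 : Even (m + 1) := by simp [Nat.even_add_one, hev]
        simp only [hev1, if_true, hev, if_false] at *
        rw [this]
        have : ∀ x : Fin 2, x + 1 + 1 = x := by decide
        exact this a
  have keyf : ∀ v : Fin n, C v = if Even v.val then a else a + 1 := by
    intro v; have := key v.val v.isLt; simpa using this
  -- theta values
  have haa : a + 1 ≠ a := by
    have : ∀ x : Fin 2, x + 1 ≠ x := by decide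
    exact this a
  have ta : theta C a = (n + 1) / 2 := by
    rw [theta, ← fin_count_even n]
    congr 1
    apply Finset.filter_congr
    intro v _
    rw [keyf v]
    by_cases hev : Even v.val <;> simp [hev, haa]
  have tb : theta C (a + 1) = n / 2 := by
    rw [theta, ← fin_count_odd n]
    congr 1
    apply Finset.filter_congr
    intro v _
    rw [keyf v]
    by_cases hev : Even v.val <;> simp [hev, haa.symm]
  -- every color is a or a+1
  have hcover : ∀ c : Fin 2, c = a ∨ c = a + 1 := by
    have : ∀ c x : Fin 2, c = x ∨ c = x + 1 := by decide
    intro c; exact this c a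
  apply le_antisymm
  · apply Finset.sup_le
    intro c _
    rcases hcover c with rfl | rfl
    · rw [ta]
    · rw [tb]; omega
  · rw [← ta]
    exact Finset.le_sup (Finset.mem_univ a)

theorem pathGraph_chromaticCurlingNumber (n : ℕ) (hn : 2 ≤ n)
    (C : Fin n → Fin (chi (pathGraph n))) (hC : IsChiMinusColoring (pathGraph n) C) :
    Finset.univ.sup (theta C) = if Even n then n / 2 else (n + 1) / 2 := by
  have hchi : chi (pathGraph n) = 2 := by
    rw [chi, chromaticNumber_pathGraph n hn]; rfl
  rw [path_aux n _ hn hchi C hC.1]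
  by_cases hev : Even n
  · simp only [hev, if_true]
    obtain ⟨m, rfl⟩ := hev
    omega
  · simp [hev]
end

section
/- Let n ≥ 2 and let P_n be the path graph on n vertices. Then the chromatic compound curling number of P_n equals n²/4 if n is even and (n²−1)/4 if n is odd. -/
open SimpleGraph Finset

lemma chi_pathGraph (n : ℕ) (hn : 2 ≤ n) : chi (pathGraph n) = 2 := by
  unfold chi
  rw [chromaticNumber_pathGraph n hn]
  rfl

lemma theta_le_half (n : ℕ) {k : ℕ} (C : Fin n → Fin k)
    (h : IsProperColoring (pathGraph n) C) (i : Fin k) :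
    theta C i ≤ (n + 1) / 2 := by
  have hle := Finset.card_le_card_of_injOn (f := fun v : Fin n => v.val / 2)
    (s := Finset.univ.filter fun v => C v = i) (t := Finset.range ((n + 1) / 2))
    (fun v _ => by
      have := v.isLt
      simp only [Finset.coe_range, Set.mem_Iio, Finset.mem_coe, Finset.mem_range]
      omega)
    (by
      intro u hu v hv huv
      simp only [coe_filter, Set.mem_setOf_eq, Finset.mem_univ, true_and] at hu hv
      by_contra hne
      have hval : u.val ≠ v.val := fun h' => hne (Fin.ext h')
      simp only at huv
      have hadj : (pathGraph n).Adj u v := by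
        rw [pathGraph_adj]
        omega
      exact h hadj (hu.trans hv.symm))
  simpa [theta] using hle

lemma evens_ge (n : ℕ) (hn : 2 ≤ n) {k : ℕ} (i : Fin k) (C : Fin n → Fin k)
    (hC : ∀ v : Fin n, Even v.val → C v = i) :
    (n + 1) / 2 ≤ theta C i := by
  have h0 : 0 < n := by omega
  have hle := Finset.card_le_card_of_injOn
    (f := fun m : ℕ => (⟨2 * m % n, Nat.mod_lt _ h0⟩ : Fin n))
    (s := Finset.range ((n + 1) / 2)) (t := Finset.univ.filter fun v => C v = i)
    (by
      intro m hm
      simp only [Finset.coe_range, Set.mem_Iio, Finset.mem_coe, Finset.mem_range] at hm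
      have h2m : 2 * m < n := by omega
      simp only [Finset.mem_coe, Finset.mem_filter, Finset.mem_univ, true_and]
      apply hC
      simp only [Nat.mod_eq_of_lt h2m]
      exact even_two_mul m)
    (by
      intro a ha b hb hab
      simp only [Finset.coe_range, Set.mem_Iio] at ha hb
      have hv : 2 * a % n = 2 * b % n := congrArg Fin.val hab
      rw [Nat.mod_eq_of_lt (by omega), Nat.mod_eq_of_lt (by omega)] at hv
      omega)
  simpa [theta] using hle

lemma theta_sum (n : ℕ) (C : Fin n → Fin 2) : theta C 0 + theta C 1 = n := by
  have hfe : (Finset.univ.filter fun v : Fin n => ¬ C v = 0)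
      = Finset.univ.filter fun v => C v = 1 := by
    apply Finset.filter_congr
    intro v _
    rcases Fin.exists_fin_two.mp ⟨C v, rfl⟩ with h | h <;> simp [h]
  have h := Finset.card_filter_add_card_filter_not
    (s := (Finset.univ : Finset (Fin n))) (p := fun v => C v = 0)
  rw [show (Finset.univ.filter fun a : Fin n => ¬(fun v => C v = 0) a)
      = Finset.univ.filter fun v => C v = 1 from hfe] at h
  simpa [theta] using h

lemma classSizesDesc_two (n : ℕ) (E : Fin n → Fin 2) :
    classSizesDesc E =
      if theta E 0 ≤ theta E 1 then [theta E 1, theta E 0]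
      else [theta E 0, theta E 1] := by
  have : (List.ofFn fun i : Fin 2 => theta E i) = [theta E 0, theta E 1] := by
    simp [List.ofFn_succ]
  rw [classSizesDesc, this]
  simp only [List.insertionSort, List.orderedInsert]
  split_ifs <;> simp <;> intro _ <;> omega

lemma key (n : ℕ) (hn : 2 ≤ n) {k : ℕ} (hk : k = 2) (C : Fin n → Fin k)
    (h1 : IsProperColoring (pathGraph n) C)
    (h2 : ∀ C' : Fin n → Fin k, IsProperColoring (pathGraph n) C' →
      ¬ List.Lex (· < ·) (classSizesDesc C) (classSizesDesc C')) :
    ∏ i, theta C i = (n + 1) / 2 * (n / 2) := by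
  subst hk
  have hsum : theta C 0 + theta C 1 = n := theta_sum n C
  have ha : theta C 0 ≤ (n + 1) / 2 := theta_le_half n C h1 0
  have hb : theta C 1 ≤ (n + 1) / 2 := theta_le_half n C h1 1
  -- the standard alternating colouring
  set D : Fin n → Fin 2 := fun v => if Even v.val then 0 else 1 with hD
  have hDprop : IsProperColoring (pathGraph n) D := by
    intro u v huv
    rw [pathGraph_adj] at huv
    have hpar : ¬ (Even u.val ↔ Even v.val) := by
      rcases huv with h | h
      · rw [← h, Nat.even_add_one]; tauto
      · rw [← h, Nat.even_add_one]; tauto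
    simp only [hD]
    split_ifs with hu hv hv <;> first | (exfalso; tauto) | decide
  have hD0 : theta D 0 = (n + 1) / 2 :=
    le_antisymm (theta_le_half n D hDprop 0)
      (evens_ge n hn 0 D (fun v hv => if_pos hv))
  have hD1 : theta D 1 = n / 2 := by
    have := theta_sum n D
    omega
  have hDlist : classSizesDesc D = [(n + 1) / 2, n / 2] := by
    rw [classSizesDesc_two, hD0, hD1]
    split_ifs with h
    · simp only [List.cons.injEq, and_true]
      omega
    · rfl
  have hClist : classSizesDesc C =
      if theta C 0 ≤ theta C 1 then [theta C 1, theta C 0]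
      else [theta C 0, theta C 1] := classSizesDesc_two n C
  have hprod : ∏ i, theta C i = theta C 0 * theta C 1 := Fin.prod_univ_two _
  have hnot := h2 D hDprop
  rw [hDlist, hClist] at hnot
  split_ifs at hnot with h
  · -- list is [θ1, θ0]
    have h1' : theta C 1 = (n + 1) / 2 := by
      by_contra hne
      exact hnot (List.Lex.rel (by omega))
    rw [hprod]
    have : theta C 0 = n / 2 := by omega
    rw [this, h1']
    ring
  · have h0' : theta C 0 = (n + 1) / 2 := by
      by_contra hne
      exact hnot (List.Lex.rel (by omega))
    rw [hprod, h0']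
    have : theta C 1 = n / 2 := by omega
    rw [this]

theorem pathGraph_chromaticCompoundCurlingNumber (n : ℕ) (hn : 2 ≤ n)
    (C : Fin n → Fin (chi (pathGraph n))) (hC : IsChiMinusColoring (pathGraph n) C) :
    ∏ i, theta C i = if Even n then n ^ 2 / 4 else (n ^ 2 - 1) / 4 := by
  have hk := chi_pathGraph n hn
  obtain ⟨h1, h2⟩ := hC
  rw [key n hn hk C h1 h2]
  rcases Nat.even_or_odd n with ⟨m, hm⟩ | ⟨m, hm⟩
  · subst hm
    rw [if_pos ⟨m, rfl⟩]
    have h1 : (m + m + 1) / 2 = m := by omega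
    have h2 : (m + m) / 2 = m := by omega
    rw [h1, h2]
    have : (m + m) ^ 2 = m * m * 4 := by ring
    rw [this, Nat.mul_div_cancel _ (by norm_num)]
  · subst hm
    rw [if_neg (by simp [Nat.even_add_one, parity_simps])]
    have h1 : (2 * m + 1 + 1) / 2 = m + 1 := by omega
    have h2 : (2 * m + 1) / 2 = m := by omega
    rw [h1, h2]
    have : (2 * m + 1) ^ 2 - 1 = (m + 1) * m * 4 := by ring_nf; omega
    rw [this, Nat.mul_div_cancel _ (by norm_num)]
end

section
/- Let n ≥ 3 and let C_n be the cycle graph on n vertices. Then the chromatic curling number of C_n equals n/2 if n is even and (n−1)/2 if n is odd. -/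
open SimpleGraph Finset

section Aux

lemma val_add_one' {n : ℕ} [NeZero n] (hn : 3 ≤ n) (v : Fin n) :
    (v + 1).val = if v.val = n - 1 then 0 else v.val + 1 := by
  have h1 : (1 : Fin n).val = 1 := by
    rw [Fin.val_one']; exact Nat.mod_eq_of_lt (by omega)
  rw [Fin.val_add, h1]
  by_cases h : v.val = n - 1
  · rw [if_pos h, h, Nat.sub_add_cancel (by omega), Nat.mod_self]
  · have := v.isLt
    rw [if_neg h, Nat.mod_eq_of_lt (by omega)]

lemma cycle_adj_iff {n : ℕ} [NeZero n] (hn : 3 ≤ n) {u v : Fin n} :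
    (cycleGraph n).Adj u v ↔ u = v + 1 ∨ v = u + 1 := by
  obtain ⟨m, rfl⟩ : ∃ m, n = m + 2 := ⟨n - 2, by omega⟩
  rw [cycleGraph_adj]
  rw [sub_eq_iff_eq_add, sub_eq_iff_eq_add, add_comm (1 : Fin (m+2)) v, add_comm (1 : Fin (m+2)) u]

lemma indep_card {n : ℕ} [NeZero n] (hn : 3 ≤ n) (S : Finset (Fin n)) (hS : ∀ v ∈ S, v + 1 ∉ S) :
    2 * S.card ≤ n := by
  have h1 : S.card ≤ Sᶜ.card := by
    apply Finset.card_le_card_of_injOn (fun v => v + 1)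
    · intro v hv
      simpa [Finset.mem_compl] using hS v hv
    · intro a _ b _ h
      exact add_right_cancel h
  have h2 : Sᶜ.card = n - S.card := by
    rw [Finset.card_compl, Fintype.card_fin]
  have h3 : S.card ≤ n := (Finset.card_le_univ S).trans (by simp)
  omega

lemma theta_le {n k : ℕ} (hn : 3 ≤ n) (C : Fin n → Fin k)
    (hC : IsProperColoring (cycleGraph n) C) (i : Fin k) : 2 * theta C i ≤ n := by
  haveI : NeZero n := ⟨by omega⟩
  apply indep_card hn
  intro v hv hv1
  simp only [Finset.mem_filter, Finset.mem_univ, true_and] at hv hv1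
  have hadj : (cycleGraph n).Adj v (v + 1) := by
    rw [cycle_adj_iff hn]; right; rfl
  exact hC hadj (hv.trans hv1.symm)

lemma sum_theta {V : Type*} [Fintype V] {k : ℕ} (C : V → Fin k) :
    ∑ i, theta C i = Fintype.card V := by
  classical
  rw [← Finset.card_univ]
  exact (Finset.card_eq_sum_card_fiberwise (fun x _ => Finset.mem_univ (C x))).symm

lemma head_eq_sup {V : Type*} [Fintype V] {k : ℕ} (C : V → Fin k) (hk : k ≠ 0) :
    ∃ h : classSizesDesc C ≠ [], (classSizesDesc C).head h = Finset.univ.sup (theta C) := by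
  have hlen : (classSizesDesc C).length = k := by
    simp [classSizesDesc]
  have hne : classSizesDesc C ≠ [] := by
    intro h; rw [h] at hlen; simp at hlen; omega
  have hmem : ∀ x, x ∈ classSizesDesc C ↔ ∃ i, theta C i = x := by
    intro x
    rw [classSizesDesc, List.mem_reverse, (List.perm_insertionSort _ _).mem_iff,
      List.mem_ofFn]
  have hsort : List.Pairwise (fun a b => b ≤ a) (classSizesDesc C) := by
    rw [classSizesDesc, List.pairwise_reverse]
    exact List.pairwise_insertionSort _ _
  refine ⟨hne, le_antisymm ?_ ?_⟩
  · obtain ⟨i, hi⟩ := (hmem _).mp (List.head_mem hne)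
    rw [← hi]
    exact Finset.le_sup (Finset.mem_univ i)
  · apply Finset.sup_le
    intro i _
    have hxmem : theta C i ∈ classSizesDesc C := (hmem _).mpr ⟨i, rfl⟩
    rw [← List.cons_head_tail hne] at hxmem hsort
    rcases List.mem_cons.mp hxmem with h | h
    · exact h.le
    · exact List.rel_of_pairwise_cons hsort h

end Aux

section Colorings

/-- An explicit 3-colouring of the cycle, used as witness for odd cycles. -/
def oddColoring (n : ℕ) : Fin n → Fin 3 :=
  fun v => if v.val = n - 1 then 2 else ⟨v.val % 2, by omega⟩

lemma oddColoring_step {n : ℕ} (hn : 3 ≤ n) (v : Fin n) :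
    haveI : NeZero n := ⟨by omega⟩
    oddColoring n v ≠ oddColoring n (v + 1) := by
  haveI : NeZero n := ⟨by omega⟩
  have hval := val_add_one' hn v
  have hvlt := v.isLt
  have valOdd : ∀ w : Fin n, (oddColoring n w).val = if w.val = n - 1 then 2 else w.val % 2 := by
    intro w
    unfold oddColoring
    split <;> rfl
  intro h
  have h' := congrArg Fin.val h
  rw [valOdd, valOdd, hval] at h'
  split_ifs at h' <;> omega

lemma oddColoring_proper {n : ℕ} (hn : 3 ≤ n) :
    IsProperColoring (cycleGraph n) (oddColoring n) := by
  haveI : NeZero n := ⟨by omega⟩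
  intro u v hadj
  rcases (cycle_adj_iff hn).mp hadj with h | h
  · rw [h]; exact (oddColoring_step hn v).symm
  · rw [h]; exact oddColoring_step hn u

lemma oddColoring_count {n : ℕ} (hn : 3 ≤ n) :
    (n - 1) / 2 ≤ theta (oddColoring n) 0 := by
  rw [theta, ← Finset.card_range ((n - 1) / 2)]
  apply Finset.card_le_card_of_injOn (fun i => ⟨2 * i % n, Nat.mod_lt _ (by omega)⟩)
  · intro i hi
    rw [Finset.mem_coe, Finset.mem_range] at hi
    have h2i : 2 * i < n - 1 := by omega
    have hmod : 2 * i % n = 2 * i := Nat.mod_eq_of_lt (by omega)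
    simp only [Finset.mem_coe, Finset.mem_filter, Finset.mem_univ, true_and]
    unfold oddColoring
    simp only [hmod]
    rw [if_neg (by omega)]
    apply Fin.ext
    simp [Nat.mul_mod_right]
  · intro a ha b hb h
    simp only [Finset.mem_coe, Finset.mem_range] at ha hb
    have h' := congrArg Fin.val h
    simp only [Nat.mod_eq_of_lt (show 2 * a < n by omega),
      Nat.mod_eq_of_lt (show 2 * b < n by omega)] at h'
    omega

/-- An explicit 2-colouring for even cycles. -/
def evenColoring (n : ℕ) : Fin n → Fin 2 :=
  fun v => ⟨v.val % 2, by omega⟩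

lemma evenColoring_proper {n : ℕ} (hn : 3 ≤ n) (he : n % 2 = 0) :
    IsProperColoring (cycleGraph n) (evenColoring n) := by
  haveI : NeZero n := ⟨by omega⟩
  have valEven : ∀ w : Fin n, (evenColoring n w).val = w.val % 2 := fun w => rfl
  have step : ∀ v : Fin n, evenColoring n v ≠ evenColoring n (v + 1) := by
    intro v h
    have h' := congrArg Fin.val h
    rw [valEven, valEven, val_add_one' hn v] at h'
    have hvlt := v.isLt
    split_ifs at h' <;> omega
  intro u v hadj
  rcases (cycle_adj_iff hn).mp hadj with h | h
  · rw [h]; exact (step v).symm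
  · rw [h]; exact step u

lemma not_colorable_one {n : ℕ} (hn : 3 ≤ n) : ¬ (cycleGraph n).Colorable 1 := by
  haveI : NeZero n := ⟨by omega⟩
  rintro ⟨C⟩
  have hadj : (cycleGraph n).Adj ⟨0, by omega⟩ ⟨1, by omega⟩ := by
    rw [cycle_adj_iff hn]
    right
    apply Fin.ext
    rw [val_add_one' hn]
    simp only
    rw [if_neg (by omega)]
  exact C.valid hadj (Subsingleton.elim _ _)

lemma not_colorable_two {n : ℕ} (hn : 3 ≤ n) (ho : n % 2 = 1) :
    ¬ (cycleGraph n).Colorable 2 := by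
  haveI : NeZero n := ⟨by omega⟩
  rintro ⟨C⟩
  have key : ∀ k, ∀ h : k < n, (C ⟨k, h⟩ = C ⟨0, by omega⟩ ↔ k % 2 = 0) := by
    intro k
    induction k with
    | zero => simp
    | succ k ih =>
      intro h
      have hk := ih (by omega)
      have hadj : (cycleGraph n).Adj ⟨k, by omega⟩ ⟨k + 1, h⟩ := by
        rw [cycle_adj_iff hn]
        right
        apply Fin.ext
        rw [val_add_one' hn]
        simp only
        rw [if_neg (by omega)]
      have hne := C.valid hadj
      have fin2 : ∀ a b c : Fin 2, a ≠ b → (b = c ↔ ¬ a = c) := by decide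
      rw [fin2 _ _ _ hne, hk]
      omega
  have h1 := (key (n - 1) (by omega)).mpr (by omega)
  have hadj : (cycleGraph n).Adj ⟨n - 1, by omega⟩ ⟨0, by omega⟩ := by
    rw [cycle_adj_iff hn]
    right
    apply Fin.ext
    rw [val_add_one' hn]
    simp
  exact C.valid hadj h1

lemma chi_eq_of {n : ℕ} {G : SimpleGraph (Fin n)} {k : ℕ} (h1 : G.Colorable k)
    (h2 : ¬ G.Colorable (k - 1)) (hk : 1 ≤ k) : chi G = k := by
  have hle : G.chromaticNumber ≤ k := h1.chromaticNumber_le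
  have hne : G.chromaticNumber ≠ ⊤ := by
    intro h
    rw [h] at hle
    exact absurd (top_le_iff.mp hle).symm (by simp)
  obtain ⟨m, hm⟩ := WithTop.ne_top_iff_exists.mp hne
  have hm' : ((m : ℕ) : ℕ∞) = G.chromaticNumber := hm
  clear hm
  rename' hm' => hm
  have hmle : m ≤ k := by
    have := hm ▸ hle
    exact_mod_cast this
  have hmgt : ¬ m ≤ k - 1 := by
    intro hle'
    apply h2
    apply SimpleGraph.chromaticNumber_le_iff_colorable.mp
    rw [← hm]
    exact_mod_cast hle'
  have : chi G = m := by rw [chi, ← hm]; exact ENat.toNat_coe m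
  omega

lemma chi_even {n : ℕ} (hn : 3 ≤ n) (he : n % 2 = 0) : chi (cycleGraph n) = 2 :=
  chi_eq_of ⟨SimpleGraph.Coloring.mk (evenColoring n) (fun {v w} h => evenColoring_proper hn he h)⟩
    (not_colorable_one hn) (by omega)

lemma chi_odd {n : ℕ} (hn : 3 ≤ n) (ho : n % 2 = 1) : chi (cycleGraph n) = 3 :=
  chi_eq_of ⟨SimpleGraph.Coloring.mk (oddColoring n) (fun {v w} h => oddColoring_proper hn h)⟩
    (not_colorable_two hn ho) (by omega)

end Colorings

theorem cycleGraph_chromaticCurlingNumber (n : ℕ) (hn : 3 ≤ n)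
    (C : Fin n → Fin (chi (cycleGraph n))) (hC : IsChiMinusColoring (cycleGraph n) C) :
    Finset.univ.sup (theta C) = if Even n then n / 2 else (n - 1) / 2 := by
  obtain ⟨hP, hLex⟩ := hC
  by_cases he : Even n
  · -- even case
    rw [if_pos he]
    have hmod : n % 2 = 0 := Nat.even_iff.mp he
    have h2 := chi_even hn hmod
    have hsum : ∑ i, theta C i = n := by
      rw [sum_theta C, Fintype.card_fin]
    have hub : Finset.univ.sup (theta C) ≤ n / 2 := by
      apply Finset.sup_le
      intro i _
      have := theta_le hn C hP i
      omega
    have hlb : n ≤ 2 * Finset.univ.sup (theta C) := by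
      calc n = ∑ i, theta C i := hsum.symm
        _ ≤ (Finset.univ : Finset (Fin (chi (cycleGraph n)))).card • Finset.univ.sup (theta C) :=
            Finset.sum_le_card_nsmul _ _ _ (fun i _ => Finset.le_sup (Finset.mem_univ i))
        _ = 2 * Finset.univ.sup (theta C) := by
            rw [Finset.card_univ, Fintype.card_fin, smul_eq_mul]
            exact congrArg (· * Finset.univ.sup (theta C)) h2
    omega
  · -- odd case
    rw [if_neg he]
    have hmod : n % 2 = 1 := Nat.odd_iff.mp (Nat.not_even_iff_odd.mp he)
    have h3 := chi_odd hn hmod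
    haveI : NeZero n := ⟨by omega⟩
    -- upper bound
    have hub : Finset.univ.sup (theta C) ≤ (n - 1) / 2 := by
      apply Finset.sup_le
      intro i _
      have := theta_le hn C hP i
      omega
    -- witness colouring
    set C' : Fin n → Fin (chi (cycleGraph n)) := fun v => Fin.cast h3.symm (oddColoring n v) with hC'def
    have hcastinj : ∀ a b : Fin 3, Fin.cast h3.symm a = Fin.cast h3.symm b → a = b := by
      intro a b h
      apply Fin.ext
      simpa using congrArg Fin.val h
    have hP' : IsProperColoring (cycleGraph n) C' := by
      intro v w hadj h
      exact oddColoring_proper hn hadj (hcastinj _ _ h)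
    have htheta : theta C' (Fin.cast h3.symm 0) = theta (oddColoring n) 0 := by
      unfold theta
      congr 1
      apply Finset.filter_congr
      intro v _
      exact ⟨fun h => hcastinj _ _ h, fun h => congrArg (Fin.cast h3.symm) h⟩
    have hsup' : (n - 1) / 2 ≤ Finset.univ.sup (theta C') := by
      refine le_trans ?_ (Finset.le_sup (Finset.mem_univ (Fin.cast h3.symm 0)))
      rw [htheta]
      exact oddColoring_count hn
    have hk : chi (cycleGraph n) ≠ 0 := by omega
    obtain ⟨hne1, hh1⟩ := head_eq_sup C hk
    obtain ⟨hne2, hh2⟩ := head_eq_sup C' hk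
    refine le_antisymm hub ?_
    by_contra hlt
    push_neg at hlt
    apply hLex C' hP'
    rw [← List.cons_head_tail hne1,
      ← List.cons_head_tail hne2]
    exact List.Lex.rel (by rw [hh1, hh2]; omega)
end

section
/- Let n ≥ 3 and let DW_n = 2C_n + K_1 be the double wheel graph obtained by joining every vertex of two disjoint cycles of order n to one common external vertex. Then the chromatic curling number of DW_n equals n if n is even and n−1 if n is odd. -/
open SimpleGraph Finset

/-- The double wheel graph `DW_n = 2Cₙ + K₁`: two disjoint cycles of order `n`
(indexed by `Fin 2`), every vertex of which is joined to a common external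
central vertex `none`. -/
def doubleWheelG (n : ℕ) : SimpleGraph (Option (Fin 2 × Fin n)) :=
  SimpleGraph.fromRel (fun a b =>
    match a, b with
    | some (i, v), some (j, w) => i = j ∧ w.val = (v.val + 1) % n
    | none, some _ => True
    | _, _ => False)

/-! ### Auxiliary lemmas -/

section Aux

lemma dw_adj_none (n : ℕ) (x : Fin 2 × Fin n) : (doubleWheelG n).Adj none (some x) := by
  simp [doubleWheelG, SimpleGraph.fromRel_adj]

lemma dw_adj_cycle (n : ℕ) (hn : 3 ≤ n) (j : Fin 2) (v : Fin n) :
    (doubleWheelG n).Adj (some (j, v)) (some (j, ⟨(v.val + 1) % n, Nat.mod_lt _ (by omega)⟩)) := by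
  have hv := v.isLt
  refine ⟨?_, Or.inl ⟨rfl, rfl⟩⟩
  simp only [ne_eq, Option.some.injEq, Prod.mk.injEq]
  rintro ⟨-, h⟩
  have := congrArg Fin.val h
  simp at this
  rcases Nat.lt_or_ge (v.val + 1) n with h1 | h1
  · rw [Nat.mod_eq_of_lt h1] at this; omega
  · have h2 : v.val + 1 = n := by omega
    rw [h2, Nat.mod_self] at this; omega

lemma dw_adj_k (n : ℕ) (hn : 3 ≤ n) (j : Fin 2) (k : ℕ) :
    (doubleWheelG n).Adj (some (j, ⟨k % n, Nat.mod_lt _ (by omega)⟩))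
      (some (j, ⟨(k + 1) % n, Nat.mod_lt _ (by omega)⟩)) := by
  have h := dw_adj_cycle n hn j ⟨k % n, Nat.mod_lt _ (by omega)⟩
  have he : (k % n + 1) % n = (k + 1) % n := by
    conv_rhs => rw [Nat.add_mod]
    rw [Nat.mod_eq_of_lt (show 1 < n by omega)]
  convert h using 4
  exact he.symm

lemma fin2_pigeonhole : ∀ a b c : Fin 2, a ≠ b → a ≠ c → b ≠ c → False := by decide

lemma fin3_unique : ∀ a b x y : Fin 3, x ≠ a → x ≠ b → y ≠ a → y ≠ b → a ≠ b → x = y := by decide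

lemma dw_not_colorable2 (n : ℕ) (hn : 3 ≤ n) (c : Option (Fin 2 × Fin n) → Fin 2)
    (hc : ∀ ⦃a b⦄, (doubleWheelG n).Adj a b → c a ≠ c b) : False := by
  have h1 := dw_adj_k n hn 0 0
  have ha := hc (dw_adj_none n (0, ⟨0 % n, Nat.mod_lt _ (by omega)⟩))
  have hb := hc (dw_adj_none n (0, ⟨(0 + 1) % n, Nat.mod_lt _ (by omega)⟩))
  have hcc := hc h1
  exact fin2_pigeonhole _ _ _ ha hb hcc

lemma dw_not_colorable3 (n : ℕ) (hn : 3 ≤ n) (ho : n % 2 = 1)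
    (c : Option (Fin 2 × Fin n) → Fin 3)
    (hc : ∀ ⦃a b⦄, (doubleWheelG n).Adj a b → c a ≠ c b) : False := by
  set d : ℕ → Fin 3 := fun k => c (some (0, ⟨k % n, Nat.mod_lt _ (by omega)⟩)) with hd
  have h0 : ∀ k, d k ≠ c none := fun k =>
    (hc (dw_adj_none n (0, ⟨k % n, Nat.mod_lt _ (by omega)⟩))).symm
  have h1 : ∀ k, d k ≠ d (k + 1) := fun k => hc (dw_adj_k n hn 0 k)
  have key : ∀ m, d (2 * m) = d 0 ∧ d (2 * m + 1) = d 1 := by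
    intro m
    induction m with
    | zero => exact ⟨rfl, rfl⟩
    | succ m ih =>
      have e1 : d (2 * (m + 1)) = d 0 := by
        refine fin3_unique (c none) (d 1) _ _ ?_ ?_ (h0 0) (h1 0) (Ne.symm (h0 1))
        · exact h0 _
        · have := h1 (2 * m + 1)
          rw [ih.2] at this
          have h2 : 2 * m + 1 + 1 = 2 * (m + 1) := by ring
          rw [h2] at this
          exact this.symm
      refine ⟨e1, ?_⟩
      refine fin3_unique (c none) (d 0) _ _ (h0 _) ?_ (h0 1) (Ne.symm (h1 0)) (Ne.symm (h0 0))
      · have := h1 (2 * (m + 1))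
        rw [e1] at this
        exact this.symm
  obtain ⟨m, hm⟩ : ∃ m, n - 1 = 2 * m := ⟨(n - 1) / 2, by omega⟩
  have hdn : d (n - 1) = d 0 := by rw [hm]; exact (key m).1
  have hlast := h1 (n - 1)
  have hn1 : n - 1 + 1 = n := by omega
  rw [hn1] at hlast
  have : d n = d 0 := by
    simp only [hd, Nat.mod_self, Nat.zero_mod]
  rw [this, hdn] at hlast
  exact hlast rfl

lemma mod_succ_eq {n v : ℕ} (hv : v < n) : (v + 1) % n = if v + 1 = n then 0 else v + 1 := by
  split
  · simp [*, Nat.mod_self]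
  · exact Nat.mod_eq_of_lt (by omega)

/-- the even coloring -/
def evenC (n : ℕ) : Option (Fin 2 × Fin n) → Fin 3 :=
  fun x => match x with
  | none => 2
  | some (_, v) => ⟨v.val % 2, by omega⟩

lemma evenC_proper (n : ℕ) (hn : 3 ≤ n) (he : n % 2 = 0) :
    ∀ ⦃a b⦄, (doubleWheelG n).Adj a b → evenC n a ≠ evenC n b := by
  rintro (_ | ⟨i, v⟩) (_ | ⟨j, w⟩) ⟨hne, hrel⟩
  · simp [doubleWheelG] at hrel
  · intro h
    have := congrArg Fin.val h
    simp [evenC] at this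
    omega
  · intro h
    have := congrArg Fin.val h
    simp [evenC] at this
    omega
  · simp only [doubleWheelG] at hrel
    intro h
    have h2 := congrArg Fin.val h
    simp only [evenC] at h2
    rcases hrel with ⟨hij, hw⟩ | ⟨hij, hw⟩
    · have hv := v.isLt
      rw [hw, mod_succ_eq hv] at h2
      split at h2 <;> omega
    · have hw' := w.isLt
      rw [hw, mod_succ_eq hw'] at h2
      split at h2 <;> omega

/-- the odd coloring -/
def oddC (n : ℕ) : Option (Fin 2 × Fin n) → Fin 4 :=
  fun x => match x with
  | none => 3
  | some (_, v) => if v.val = n - 1 then 2 else ⟨v.val % 2, by omega⟩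

lemma oddC_proper (n : ℕ) (hn : 3 ≤ n) (ho : n % 2 = 1) :
    ∀ ⦃a b⦄, (doubleWheelG n).Adj a b → oddC n a ≠ oddC n b := by
  have key : ∀ (v w : Fin n), w.val = (v.val + 1) % n →
      oddC n (some ((0 : Fin 2), v)) ≠ oddC n (some (0, w)) := by
    intro v w hw h
    have hv := v.isLt
    have hwlt := w.isLt
    have h2 := congrArg Fin.val h
    rw [mod_succ_eq hv] at hw
    simp only [oddC] at h2
    by_cases hvn : v.val + 1 = n
    · rw [if_pos hvn] at hw
      rw [if_pos (by omega), if_neg (by omega)] at h2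
      simp at h2
      omega
    · rw [if_neg hvn] at hw
      by_cases hwn : w.val = n - 1
      · rw [if_neg (by omega), if_pos hwn] at h2
        simp at h2
        omega
      · rw [if_neg (by omega), if_neg hwn] at h2
        simp at h2
        omega
  rintro (_ | ⟨i, v⟩) (_ | ⟨j, w⟩) ⟨hne, hrel⟩
  · simp [doubleWheelG] at hrel
  · intro h
    have := congrArg Fin.val h
    simp only [oddC] at this
    split at this <;> simp at this <;> omega
  · intro h
    have := congrArg Fin.val h
    simp only [oddC] at this
    split at this <;> simp at this <;> omega
  · have hiv : ∀ (i : Fin 2) (v : Fin n), oddC n (some (i, v)) = oddC n (some (0, v)) := by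
      intro i v; simp [oddC]
    simp only [doubleWheelG] at hrel
    rcases hrel with ⟨hij, hw⟩ | ⟨hij, hw⟩
    · rw [hiv i v, hiv j w]; exact key v w hw
    · rw [hiv i v, hiv j w]; exact (key w v hw).symm

lemma chi_eq {V : Type*} (G : SimpleGraph V) (k : ℕ) (hk : 1 ≤ k)
    (hcol : G.Colorable k)
    (hnot : ∀ c : V → Fin (k - 1), ¬ ∀ ⦃a b⦄, G.Adj a b → c a ≠ c b) :
    chi G = k := by
  have hle := hcol.chromaticNumber_le
  have hne : G.chromaticNumber ≠ ⊤ := by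
    intro h
    rw [h] at hle
    simp at hle
  have hcoe := ENat.coe_toNat hne
  have h3 : chi G ≤ k := by
    have : (chi G : ℕ∞) ≤ (k : ℕ∞) := by unfold chi; rw [hcoe]; exact hle
    exact_mod_cast this
  have h2 : ¬ chi G ≤ k - 1 := by
    intro h
    have : G.chromaticNumber ≤ (k - 1 : ℕ) := by
      rw [← hcoe]
      exact_mod_cast h
    obtain ⟨c⟩ := SimpleGraph.chromaticNumber_le_iff_colorable.mp this
    exact hnot c fun a b hab => c.valid hab
  omega

lemma card_filter_option {β : Type*} [Fintype β] [DecidableEq β] (p : Option β → Prop)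
    [DecidablePred p] :
    (univ.filter p).card = (if p none then 1 else 0) + (univ.filter fun b => p (some b)).card := by
  classical
  have key : (univ.filter p : Finset (Option β)) =
      (if p none then {none} else ∅) ∪
        ((univ.filter fun b => p (some b)).map Function.Embedding.some) := by
    ext x
    simp only [mem_filter, mem_univ, true_and, mem_union, mem_map]
    cases x with
    | none =>
      constructor
      · intro h
        left
        simp [h]
      · rintro (h | ⟨b, hb, hbe⟩)
        · split at h <;> simp_all
        · simp [Function.Embedding.some] at hbe
    | some b =>
      constructor
      · intro h
        right
        exact ⟨b, by simp [h], rfl⟩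
      · rintro (h | ⟨c, hc, hce⟩)
        · split at h <;> simp_all
        · have : c = b := by simpa [Function.Embedding.some] using hce
          subst this
          simpa using hc
  rw [key, Finset.card_union_of_disjoint, Finset.card_map]
  · congr 1
    split <;> simp
  · split
    · simp [Finset.disjoint_left, Function.Embedding.some]
    · simp

lemma card_filter_fin2prod {γ : Type*} [Fintype γ] [DecidableEq γ] (q : Fin 2 × γ → Prop)
    [DecidablePred q] :
    (univ.filter q).card =
      (univ.filter fun v => q (0, v)).card + (univ.filter fun v => q (1, v)).card := by
  classical
  have key : (univ.filter q : Finset (Fin 2 × γ)) =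
      ((univ.filter fun v => q (0, v)).map
        ⟨fun v => ((0 : Fin 2), v), fun a b h => by simpa using h⟩) ∪
      ((univ.filter fun v => q (1, v)).map
        ⟨fun v => ((1 : Fin 2), v), fun a b h => by simpa using h⟩) := by
    ext ⟨i, v⟩
    simp only [mem_filter, mem_univ, true_and, mem_union, mem_map, Function.Embedding.coeFn_mk,
      Prod.mk.injEq]
    fin_cases i
    · constructor
      · intro h
        left
        exact ⟨v, by simpa using h, rfl⟩
      · rintro (⟨w, hw, _, rfl⟩ | ⟨w, hw, h0, rfl⟩)
        · simpa using hw
    · constructor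
      · intro h
        right
        exact ⟨v, by simpa using h, rfl⟩
      · rintro (⟨w, hw, h0, rfl⟩ | ⟨w, hw, _, rfl⟩)
        · simpa using hw
  rw [key, Finset.card_union_of_disjoint, Finset.card_map, Finset.card_map]
  rw [Finset.disjoint_left]
  rintro ⟨i, v⟩ h0 h1
  simp only [mem_map, Function.Embedding.coeFn_mk, Prod.mk.injEq] at h0 h1
  obtain ⟨w, -, hw0, -⟩ := h0
  obtain ⟨w', -, hw1, -⟩ := h1

lemma cycle_indep_bound {n : ℕ} (hn : 3 ≤ n) (S : Finset (Fin n))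
    (hS : ∀ v ∈ S, (⟨(v.val + 1) % n, Nat.mod_lt _ (by omega)⟩ : Fin n) ∉ S) :
    S.card ≤ n / 2 := by
  set f : Fin n → Fin n := fun v => ⟨(v.val + 1) % n, Nat.mod_lt _ (by omega)⟩ with hf
  have hinj : Function.Injective f := by
    intro a b h
    have ha := a.isLt
    have hb := b.isLt
    have h2 := congrArg Fin.val h
    simp only [hf] at h2
    rcases Nat.lt_or_ge (a.val + 1) n with h1 | h1 <;>
      rcases Nat.lt_or_ge (b.val + 1) n with h3 | h3
    · rw [Nat.mod_eq_of_lt h1, Nat.mod_eq_of_lt h3] at h2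
      exact Fin.ext (by omega)
    · have : b.val + 1 = n := by omega
      rw [Nat.mod_eq_of_lt h1, this, Nat.mod_self] at h2
      omega
    · have : a.val + 1 = n := by omega
      rw [this, Nat.mod_self, Nat.mod_eq_of_lt h3] at h2
      omega
    · exact Fin.ext (by omega)
  have hsub : S.image f ⊆ univ \ S := by
    intro x hx
    simp only [mem_image] at hx
    obtain ⟨v, hv, rfl⟩ := hx
    simp only [mem_sdiff, mem_univ, true_and]
    exact hS v hv
  have h1 : S.card = (S.image f).card := (Finset.card_image_of_injective S hinj).symm
  have h2 : (S.image f).card ≤ (univ \ S).card := Finset.card_le_card hsub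
  have h3 : (univ \ S).card = n - S.card := by
    rw [Finset.card_sdiff_of_subset (Finset.subset_univ S)]
    simp
  have h4 : S.card ≤ n := by
    have := Finset.card_le_card (Finset.subset_univ S)
    simpa using this
  omega

lemma le_card_filter {n m : ℕ} (P : Fin n → Prop) [DecidablePred P] (f : Fin m → Fin n)
    (hinj : Function.Injective f) (hP : ∀ i, P (f i)) : m ≤ (univ.filter P).card := by
  have : (univ : Finset (Fin m)).card ≤ (univ.filter P).card := by
    apply Finset.card_le_card_of_injOn f
    · intro i _
      simp [hP]
    · exact hinj.injOn
  simpa using this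

lemma sorted_le_reverse_headI (s : List ℕ) (hs : s.Pairwise (· ≤ ·)) :
    ∀ x ∈ s, x ≤ s.reverse.headI := by
  induction s with
  | nil => simp
  | cons a t ih =>
    intro x hx
    rcases eq_or_ne t ([] : List ℕ) with rfl | hne
    · simp at hx ⊢
      omega
    · have hrh : (a :: t).reverse.headI = t.reverse.headI := by
        rw [List.reverse_cons]
        cases htr : t.reverse with
        | nil => exact absurd (by simpa using htr) hne
        | cons b u => simp
      rw [hrh]
      have hmem : t.reverse.headI ∈ t := by
        cases htr : t.reverse with
        | nil => exact absurd (by simpa using htr) hne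
        | cons b u =>
          have : b ∈ t.reverse := by rw [htr]; exact List.mem_cons_self
          simpa using this
      rcases List.mem_cons.mp hx with rfl | hx
      · exact List.rel_of_pairwise_cons hs hmem
      · exact ih hs.of_cons x hx

lemma le_headI_reverse_sort (l : List ℕ) (x : ℕ) (hx : x ∈ l) :
    x ≤ ((List.insertionSort (· ≤ ·) l).reverse).headI :=
  sorted_le_reverse_headI _ (List.pairwise_insertionSort _ l)
    x ((List.perm_insertionSort _ l).mem_iff.mpr hx)

lemma headI_reverse_sort_mem (l : List ℕ) (hl : l ≠ []) :
    ((List.insertionSort (· ≤ ·) l).reverse).headI ∈ l := by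
  have hne : (List.insertionSort (· ≤ ·) l).reverse ≠ [] := by
    simp only [ne_eq, List.reverse_eq_nil_iff]
    intro h
    exact hl (List.eq_nil_of_length_eq_zero (by
      rw [← (List.perm_insertionSort (· ≤ ·) l).length_eq, h, List.length_nil]))
  cases htr : (List.insertionSort (· ≤ ·) l).reverse with
  | nil => exact absurd htr hne
  | cons b u =>
    have hb : b ∈ (List.insertionSort (· ≤ ·) l).reverse := by
      rw [htr]; exact List.mem_cons_self
    simp only [List.mem_reverse] at hb
    simpa using (List.perm_insertionSort (· ≤ ·) l).mem_iff.mp hb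

lemma headI_le_of_not_lex (A B : List ℕ) (hA : A ≠ []) (hB : B ≠ [])
    (h : ¬ List.Lex (· < ·) A B) : B.headI ≤ A.headI := by
  cases A with
  | nil => exact absurd rfl hA
  | cons a t =>
    cases B with
    | nil => exact absurd rfl hB
    | cons b s =>
      simp only [List.headI_cons]
      by_contra hab
      exact h (List.Lex.rel (by omega))

/-- Any colour class of a proper colouring of the double wheel has at most `2 * (n / 2)`
vertices. -/
lemma dw_theta_le (n : ℕ) (hn : 3 ≤ n) {k : ℕ}
    (c : Option (Fin 2 × Fin n) → Fin k)
    (hc : IsProperColoring (doubleWheelG n) c) (i : Fin k) :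
    theta c i ≤ 2 * (n / 2) := by
  classical
  unfold theta
  rw [card_filter_option (fun x => c x = i), card_filter_fin2prod (fun b => c (some b) = i)]
  by_cases hnone : c none = i
  · have hzero : ∀ (j : Fin 2), (univ.filter fun v : Fin n => c (some (j, v)) = i) = ∅ := by
      intro j
      rw [Finset.filter_eq_empty_iff]
      intro v _
      have := hc (dw_adj_none n (j, v))
      rw [hnone] at this
      exact fun h => this (h.symm)
    rw [if_pos hnone, hzero 0, hzero 1]
    simp
    omega
  · rw [if_neg hnone]
    have hbound : ∀ (j : Fin 2), (univ.filter fun v : Fin n => c (some (j, v)) = i).card ≤ n / 2 := by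
      intro j
      apply cycle_indep_bound hn
      intro v hv hsucc
      simp only [mem_filter, mem_univ, true_and] at hv hsucc
      exact hc (dw_adj_cycle n hn j v) (hv.trans hsucc.symm)
    have := hbound 0
    have := hbound 1
    omega

end Aux

theorem doubleWheelGraph_chromaticCurlingNumber (n : ℕ) (hn : 3 ≤ n)
    (C : Option (Fin 2 × Fin n) → Fin (chi (doubleWheelG n)))
    (hC : IsChiMinusColoring (doubleWheelG n) C) :
    Finset.univ.sup (theta C) = if Even n then n else n - 1 := by
  classical
  set t := 2 * (n / 2) with ht
  -- a proper colouring with a colour class of size at least t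
  have hmain : ∃ C' : Option (Fin 2 × Fin n) → Fin (chi (doubleWheelG n)),
      IsProperColoring (doubleWheelG n) C' ∧ ∃ i : Fin (chi (doubleWheelG n)), t ≤ theta C' i := by
    rcases Nat.even_or_odd n with he | hoo
    · have he2 : n % 2 = 0 := Nat.even_iff.mp he
      have hchi : chi (doubleWheelG n) = 3 :=
        chi_eq (doubleWheelG n) 3 (by norm_num) ⟨SimpleGraph.Coloring.mk (evenC n) (fun hab => evenC_proper n hn he2 hab)⟩
          (fun c hc => dw_not_colorable2 n hn c hc)
      refine ⟨fun x => (finCongr hchi.symm) (evenC n x), ?_, (finCongr hchi.symm) 0, ?_⟩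
      · intro a b hab h
        exact evenC_proper n hn he2 hab ((finCongr hchi.symm).injective h)
      · unfold theta
        have hfe : (univ.filter fun x => (finCongr hchi.symm) (evenC n x) = (finCongr hchi.symm) 0)
            = univ.filter fun x => evenC n x = 0 := by
          apply Finset.filter_congr
          intro x _
          simp [Equiv.apply_eq_iff_eq]
        rw [hfe, card_filter_option (fun x => evenC n x = (0 : Fin 3)),
          card_filter_fin2prod (fun b => evenC n (some b) = (0 : Fin 3))]
        have hlow : ∀ j : Fin 2,
            n / 2 ≤ (univ.filter fun v : Fin n => evenC n (some (j, v)) = (0 : Fin 3)).card := by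
          intro j
          apply le_card_filter _ (fun i : Fin (n / 2) => (⟨2 * i.val, by omega⟩ : Fin n))
          · intro a b hab
            have := congrArg Fin.val hab
            simp at this
            exact Fin.ext (by omega)
          · intro i
            have : (2 * i.val) % 2 = 0 := by omega
            simp [evenC, Fin.ext_iff, this]
        have := hlow 0
        have := hlow 1
        omega
    · have ho2 : n % 2 = 1 := Nat.odd_iff.mp hoo
      have hchi : chi (doubleWheelG n) = 4 :=
        chi_eq (doubleWheelG n) 4 (by norm_num) ⟨SimpleGraph.Coloring.mk (oddC n) (fun hab => oddC_proper n hn ho2 hab)⟩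
          (fun c hc => dw_not_colorable3 n hn ho2 c hc)
      refine ⟨fun x => (finCongr hchi.symm) (oddC n x), ?_, (finCongr hchi.symm) 0, ?_⟩
      · intro a b hab h
        exact oddC_proper n hn ho2 hab ((finCongr hchi.symm).injective h)
      · unfold theta
        have hfe : (univ.filter fun x => (finCongr hchi.symm) (oddC n x) = (finCongr hchi.symm) 0)
            = univ.filter fun x => oddC n x = 0 := by
          apply Finset.filter_congr
          intro x _
          simp [Equiv.apply_eq_iff_eq]
        rw [hfe, card_filter_option (fun x => oddC n x = (0 : Fin 4)),
          card_filter_fin2prod (fun b => oddC n (some b) = (0 : Fin 4))]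
        have hlow : ∀ j : Fin 2,
            n / 2 ≤ (univ.filter fun v : Fin n => oddC n (some (j, v)) = (0 : Fin 4)).card := by
          intro j
          apply le_card_filter _ (fun i : Fin (n / 2) => (⟨2 * i.val, by omega⟩ : Fin n))
          · intro a b hab
            have := congrArg Fin.val hab
            simp at this
            exact Fin.ext (by omega)
          · intro i
            have hilt := i.isLt
            have h1 : (2 * i.val) % 2 = 0 := by omega
            have h2 : 2 * i.val ≠ n - 1 := by omega
            simp [oddC, h2, Fin.ext_iff, h1]
        have := hlow 0
        have := hlow 1
        omega
  -- k is positive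
  have hkpos : 0 < chi (doubleWheelG n) := by
    rcases Nat.even_or_odd n with he | hoo
    · have he2 : n % 2 = 0 := Nat.even_iff.mp he
      have : chi (doubleWheelG n) = 3 :=
        chi_eq (doubleWheelG n) 3 (by norm_num) ⟨SimpleGraph.Coloring.mk (evenC n) (fun hab => evenC_proper n hn he2 hab)⟩
          (fun c hc => dw_not_colorable2 n hn c hc)
      omega
    · have ho2 : n % 2 = 1 := Nat.odd_iff.mp hoo
      have : chi (doubleWheelG n) = 4 :=
        chi_eq (doubleWheelG n) 4 (by norm_num) ⟨SimpleGraph.Coloring.mk (oddC n) (fun hab => oddC_proper n hn ho2 hab)⟩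
          (fun c hc => dw_not_colorable3 n hn ho2 c hc)
      omega
  obtain ⟨C', hC'prop, i0, hi0⟩ := hmain
  -- upper bound
  have hub : Finset.univ.sup (theta C) ≤ t := by
    apply Finset.sup_le
    intro i _
    exact dw_theta_le n hn C hC.1 i
  -- lower bound via the lexicographic maximality
  have hlex := hC.2 C' hC'prop
  have hBne : classSizesDesc C' ≠ [] := by
    unfold classSizesDesc
    simp only [ne_eq, List.reverse_eq_nil_iff]
    intro h
    have := (List.perm_insertionSort (· ≤ ·) (List.ofFn fun i => theta C' i)).length_eq
    rw [h] at this
    simp at this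
    omega
  have hAne : classSizesDesc C ≠ [] := by
    unfold classSizesDesc
    simp only [ne_eq, List.reverse_eq_nil_iff]
    intro h
    have := (List.perm_insertionSort (· ≤ ·) (List.ofFn fun i => theta C i)).length_eq
    rw [h] at this
    simp at this
    omega
  have hBhead : t ≤ (classSizesDesc C').headI := by
    apply le_trans hi0
    exact le_headI_reverse_sort _ _ (by rw [List.mem_ofFn]; exact ⟨i0, rfl⟩)
  have hAB : (classSizesDesc C').headI ≤ (classSizesDesc C).headI :=
    headI_le_of_not_lex _ _ hAne hBne hlex
  have hAmem : (classSizesDesc C).headI ∈ List.ofFn (fun i => theta C i) := by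
    apply headI_reverse_sort_mem
    intro h
    have := congrArg List.length h
    simp at this
    omega
  obtain ⟨i1, hi1⟩ := List.mem_ofFn.mp hAmem
  have hlb : t ≤ Finset.univ.sup (theta C) := by
    calc t ≤ (classSizesDesc C).headI := le_trans hBhead hAB
    _ = theta C i1 := hi1.symm
    _ ≤ Finset.univ.sup (theta C) := Finset.le_sup (Finset.mem_univ i1)
  have hsup : Finset.univ.sup (theta C) = t := le_antisymm hub hlb
  rw [hsup, ht]
  rcases Nat.even_or_odd n with he | hoo
  · rw [if_pos he]
    have := Nat.even_iff.mp he
    omega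
  · rw [if_neg (Nat.not_even_iff_odd.mpr hoo)]
    have := Nat.odd_iff.mp hoo
    omega
end
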